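/- arXiv:2408.08702 — 2 statements merged into one kernel-verified Lean document; each statement's English description precedes it below -/
import Mathlib

section
/- Consider a system where each process delivers messages strictly in increasing position order, each delivery of position k by process i commits message log_i(k), and any two commits at the same position agree on the message (commit-agreement) while any two commits of the same message agree on the position (position-agreement). Then Agreement holds: if process i delivers m1 and process j delivers m2, then either i delivers m2 or j delivers m1. -/
/-! Of two delivery logs, the longer one has delivered some message at every position of the shorter
one, and commit-agreement forces that message to be the one the shorter log delivered there. -/

section Delivery

variable {P Msg : Type} {commit : ℕ → ℕ → Msg → Prop} {delivers : P → ℕ → Msg → Prop}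

theorem eq_of_delivers_of_delivers
    (hcm : ∀ (i : P) (k : ℕ) (m : Msg), delivers i k m → ∃ e, commit e k m)
    (hca : ∀ e1 e2 k m1 m2, commit e1 k m1 → commit e2 k m2 → m1 = m2)
    {i j : P} {k : ℕ} {m1 m2 : Msg} (h1 : delivers i k m1) (h2 : delivers j k m2) :
    m1 = m2 := by
  obtain ⟨e1, c1⟩ := hcm i k m1 h1
  obtain ⟨e2, c2⟩ := hcm j k m2 h2
  exact hca e1 e2 k m1 m2 c1 c2

theorem delivers_of_delivers_of_le
    (hdc : ∀ (i : P) (k : ℕ) (m : Msg), delivers i k m → ∀ k' < k, ∃ m', delivers i k' m')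
    (hcm : ∀ (i : P) (k : ℕ) (m : Msg), delivers i k m → ∃ e, commit e k m)
    (hca : ∀ e1 e2 k m1 m2, commit e1 k m1 → commit e2 k m2 → m1 = m2)
    {i j : P} {k1 k2 : ℕ} {m1 m2 : Msg} (h1 : delivers i k1 m1) (h2 : delivers j k2 m2)
    (hk : k2 ≤ k1) : delivers i k2 m2 := by
  obtain ⟨m, hm⟩ : ∃ m, delivers i k2 m :=
    hk.eq_or_lt.elim (fun h => ⟨m1, h ▸ h1⟩) (hdc i k1 m1 h1 k2)
  rwa [eq_of_delivers_of_delivers hcm hca hm h2] at hm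

end Delivery

theorem agreement_of_commit_and_position_agreement_general
    {P Msg : Type} (commit : ℕ → ℕ → Msg → Prop)
    (delivers : P → ℕ → Msg → Prop)  -- process i delivers message m at position k
    -- positions delivered by a process are downward closed (no gaps, in order)
    (hdc : ∀ (i : P) (k : ℕ) (m : Msg), delivers i k m →
      ∀ k' < k, ∃ m', delivers i k' m')
    -- delivering position k means some commit occurred at position k for that message
    (hcm : ∀ (i : P) (k : ℕ) (m : Msg), delivers i k m → ∃ e, commit e k m)
    -- commit-agreement
    (hca : ∀ e1 e2 k m1 m2, commit e1 k m1 → commit e2 k m2 → m1 = m2) :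
    -- Agreement
    ∀ (i j : P) (m1 m2 : Msg),
      (∃ k, delivers i k m1) → (∃ k, delivers j k m2) →
      (∃ k, delivers i k m2) ∨ (∃ k, delivers j k m1) := by
  rintro i j m1 m2 ⟨k1, h1⟩ ⟨k2, h2⟩
  rcases le_total k2 k1 with hk | hk
  · exact Or.inl ⟨k2, delivers_of_delivers_of_le hdc hcm hca h1 h2 hk⟩
  · exact Or.inr ⟨k1, delivers_of_delivers_of_le hdc hcm hca h2 h1 hk⟩

/-- in-order gap-free delivery of committed positions, together with
commit-agreement and position-agreement, implies Agreement. -/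
theorem agreement_of_commit_and_position_agreement
    {P Msg : Type} (commit : ℕ → ℕ → Msg → Prop)
    (delivers : P → ℕ → Msg → Prop)  -- process i delivers message m at position k
    -- positions delivered by a process are downward closed (no gaps, in order)
    (hdc : ∀ (i : P) (k : ℕ) (m : Msg), delivers i k m →
      ∀ k' < k, ∃ m', delivers i k' m')
    -- delivering position k means some commit occurred at position k for that message
    (hcm : ∀ (i : P) (k : ℕ) (m : Msg), delivers i k m → ∃ e, commit e k m)
    -- commit-agreement
    (hca : ∀ e1 e2 k m1 m2, commit e1 k m1 → commit e2 k m2 → m1 = m2)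
    -- position-agreement
    (hpa : ∀ e1 e2 k1 k2 m, commit e1 k1 m → commit e2 k2 m → k1 = k2) :
    -- Agreement
    ∀ (i j : P) (m1 m2 : Msg),
      (∃ k, delivers i k m1) → (∃ k, delivers j k m2) →
      (∃ k, delivers i k m2) ∨ (∃ k, delivers j k m1) :=
  agreement_of_commit_and_position_agreement_general commit delivers hdc hcm hca
end

section
/- Assume Agreement (if p_i delivers m1 and p_j delivers m2 then p_i delivers m2 or p_j delivers m1) and Total Order hold for a history h, and each process delivers each message at most once. Then for any two processes i and j and for all n, if both i and j deliver at least n messages, their first n delivered messages coincide as sequences. -/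
/-- under Agreement, Total Order and at-most-once delivery, the
delivery sequences of any two processes agree on their common-length prefixes. -/
theorem delivery_sequences_prefix_comparable
    {P M : Type} (seq : P → List M)
    -- each process delivers each message at most once
    (hnodup : ∀ i : P, (seq i).Nodup)
    -- Total Order
    (hTO : ∀ (i j : P) (m1 m2 : M) (a b : ℕ),
      a < b → (seq i)[a]? = some m1 → (seq i)[b]? = some m2 →
      ∀ b' : ℕ, (seq j)[b']? = some m2 →
        ∃ a' < b', (seq j)[a']? = some m1)
    -- Agreement
    (hAg : ∀ (i j : P) (m1 m2 : M),
      m1 ∈ seq i → m2 ∈ seq j → m2 ∈ seq i ∨ m1 ∈ seq j) :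
    ∀ (i j : P) (n : ℕ), n ≤ (seq i).length → n ≤ (seq j).length →
      (seq i).take n = (seq j).take n := by
  intro i j n
  induction n with
  | zero => simp
  | succ n ih =>
    intro h1 h2
    have hn1 : n < (seq i).length := Nat.lt_of_succ_le h1
    have hn2 : n < (seq j).length := Nat.lt_of_succ_le h2
    have htake := ih (le_of_lt hn1) (le_of_lt hn2)
    have key : ∀ (a b : P) (mj : M), (seq a).take n = (seq b).take n →
        n < (seq a).length → n < (seq b).length →
        (seq b)[n]? = some mj → mj ∈ seq a →
        (seq a)[n]? = (seq b)[n]? := by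
      intro a b mj ht hna hnb hbj hmem
      obtain ⟨k, hk⟩ := List.mem_iff_getElem?.mp hmem
      rcases lt_trichotomy k n with hkn | rfl | hkn
      · -- mj already appears before index n: contradicts Nodup of b
        have hbk : (seq b)[k]? = some mj := by
          rw [← List.getElem?_take_of_lt hkn, ← ht, List.getElem?_take_of_lt hkn]; exact hk
        have : k = n :=
          List.getElem?_inj (lt_trans hkn hnb) (hnodup b) |>.mp (hbk.trans hbj.symm)
        omega
      · rw [hk, hbj]
      · -- mj appears after index n in a; use Total Order
        have hmia : (seq a)[n]? = some ((seq a).get ⟨n, hna⟩) :=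
          List.getElem?_eq_getElem hna
        obtain ⟨a', ha', hja'⟩ :=
          hTO a b ((seq a).get ⟨n, hna⟩) mj n k hkn hmia hk n hbj
        have haa' : (seq a)[a']? = some ((seq a).get ⟨n, hna⟩) := by
          rw [← List.getElem?_take_of_lt ha', ht, List.getElem?_take_of_lt ha']; exact hja'
        have : a' = n :=
          List.getElem?_inj (lt_trans ha' hna) (hnodup a) |>.mp (haa'.trans hmia.symm)
        omega
    have hmi : (seq i)[n]? = some ((seq i).get ⟨n, hn1⟩) := List.getElem?_eq_getElem hn1
    have hmj : (seq j)[n]? = some ((seq j).get ⟨n, hn2⟩) := List.getElem?_eq_getElem hn2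
    have hgeq : (seq i)[n]? = (seq j)[n]? := by
      rcases hAg i j _ _ (List.mem_of_getElem? hmi) (List.mem_of_getElem? hmj) with h | h
      · exact key i j _ htake hn1 hn2 hmj h
      · exact (key j i _ htake.symm hn2 hn1 hmi h).symm
    rw [List.take_succ, List.take_succ, htake]
    rw [hgeq]
end
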